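/- arXiv:1305.5619 — 3 statements merged into one kernel-verified Lean document; each statement's English description precedes it below -/
import Mathlib

section
/- Let d ≥ 1 and L ∈ ℕ. Every eigenvalue of the matrix Δ_L has multiplicity at most d(2L+1)^{d−1}; equivalently, for every λ ∈ ℝ the dimension of the eigenspace ker(Δ_L − λ) is at most d(2L+1)^{d−1}. -/
open MeasureTheory Finset Real

namespace LevelRepulsion

/-- The cube `Λ_L = {n ∈ ℤ^d : |n_i| ≤ L}`, as an index type. -/
abbrev Idx (d L : ℕ) := Fin d → (Finset.Icc (-(L:ℤ)) (L:ℤ))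

/-- The adjacency (discrete Laplacian) matrix `Δ_L = χ_{Λ_L} Δ χ_{Λ_L}` on `ℓ²(Λ_L)`. -/
def lap (d L : ℕ) : Matrix (Idx d L) (Idx d L) ℝ :=
  fun n m => if (∑ i, |((n i : ℤ)) - ((m i : ℤ))|) = 1 then 1 else 0

lemma vanish (d L : ℕ) (hd : 1 ≤ d) (lam : ℝ) (u : Idx d L → ℝ)
    (hu : ∀ n, ∑ m, lap d L n m * u m = lam * u n)
    (h0 : ∀ n : Idx d L, ((n ⟨0, hd⟩ : ℤ)) = -(L:ℤ) → u n = 0) :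
    ∀ t : ℕ, ∀ n : Idx d L, ((n ⟨0, hd⟩ : ℤ)) ≤ -(L:ℤ) + t → u n = 0 := by
  set i0 : Fin d := ⟨0, hd⟩
  intro t
  induction t with
  | zero =>
    intro n hn
    apply h0
    have := (Finset.mem_Icc.mp (n i0).2).1
    omega
  | succ t ih =>
    intro n hn
    by_cases hcase : ((n i0 : ℤ)) ≤ -(L:ℤ) + t
    · exact ih n hcase
    have hval : ((n i0 : ℤ)) = -(L:ℤ) + t + 1 := by push_cast at hn ⊢; omega
    have hle : ((n i0 : ℤ)) ≤ L := (Finset.mem_Icc.mp (n i0).2).2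
    have hvmem : (-(L:ℤ) + t) ∈ Finset.Icc (-(L:ℤ)) (L:ℤ) := by
      rw [Finset.mem_Icc]; omega
    set v : (Finset.Icc (-(L:ℤ)) (L:ℤ)) := ⟨-(L:ℤ) + t, hvmem⟩ with hv
    set n' : Idx d L := Function.update n i0 v with hn'
    have hn'0 : ((n' i0 : ℤ)) = -(L:ℤ) + t := by
      simp [hn', Function.update_self, hv]
    have hn'j : ∀ j : Fin d, j ≠ i0 → n' j = n j := by
      intro j hj; simp [hn', Function.update_of_ne hj]
    have hun' : u n' = 0 := ih n' (by rw [hn'0])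
    have heq := hu n'
    rw [hun', mul_zero] at heq
    have hsum : ∑ m, lap d L n' m * u m = u n := by
      rw [Finset.sum_eq_single n]
      · have hlap1 : lap d L n' n = 1 := by
          unfold lap
          rw [if_pos]
          rw [Fintype.sum_eq_single i0]
          · have hX : ((n' i0 : ℤ)) - ((n i0 : ℤ)) = -1 := by omega
            rw [hX]; norm_num
          · intro j hj; rw [hn'j j hj]; simp
        rw [hlap1, one_mul]
      · intro m _ hm
        by_cases hlap : (∑ i, |((n' i : ℤ)) - ((m i : ℤ))|) = 1
        · have hnonneg : ∀ i ∈ Finset.univ, (0:ℤ) ≤ |((n' i : ℤ)) - ((m i : ℤ))| :=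
            fun i _ => abs_nonneg _
          have h1 : |((n' i0 : ℤ)) - ((m i0 : ℤ))| ≤ 1 := by
            rw [← hlap]
            exact Finset.single_le_sum hnonneg (Finset.mem_univ i0)
          have hne : ((m i0 : ℤ)) ≠ -(L:ℤ) + t + 1 := by
            intro habs
            have hX : ((n' i0 : ℤ)) - ((m i0 : ℤ)) = -1 := by omega
            have habs1 : |((n' i0 : ℤ)) - ((m i0 : ℤ))| = 1 := by
              rw [hX]; norm_num
            have hrest : ∑ i ∈ Finset.univ.erase i0, |((n' i : ℤ)) - ((m i : ℤ))| = 0 := by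
              have hsplit : |((n' i0 : ℤ)) - ((m i0 : ℤ))| +
                  ∑ i ∈ Finset.univ.erase i0, |((n' i : ℤ)) - ((m i : ℤ))| =
                  ∑ i, |((n' i : ℤ)) - ((m i : ℤ))| :=
                Finset.add_sum_erase Finset.univ
                  (fun i => |((n' i : ℤ)) - ((m i : ℤ))|) (Finset.mem_univ i0)
              omega
            have hzero := (Finset.sum_eq_zero_iff_of_nonneg
              (fun i _ => abs_nonneg _)).mp hrest
            apply hm
            funext j
            by_cases hj : j = i0
            · subst hj
              apply Subtype.ext
              omega
            · have hz := hzero j (Finset.mem_erase.mpr ⟨hj, Finset.mem_univ j⟩)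
              rw [abs_eq_zero, sub_eq_zero] at hz
              rw [hn'j j hj] at hz
              exact Subtype.ext hz.symm
          have hmle : ((m i0 : ℤ)) ≤ -(L:ℤ) + t := by
            rw [hn'0] at h1
            have := abs_le.mp h1
            omega
          rw [ih m hmle, mul_zero]
        · unfold lap
          rw [if_neg hlap, zero_mul]
      · intro h; exact absurd (Finset.mem_univ n) h
    rw [hsum] at heq
    exact heq

/-- Lemma 3.1 of the paper: every eigenvalue of `Δ_L` has multiplicity at most
`d(2L+1)^{d-1}`, i.e. for every `λ ∈ ℝ` the eigenspace `ker(Δ_L - λ)` has dimension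
at most `d(2L+1)^{d-1}`. -/
theorem statement2 (d L : ℕ) (hd : 1 ≤ d) (lam : ℝ) :
    Module.finrank ℝ (Module.End.eigenspace (Matrix.toLin' (lap d L)) lam)
      ≤ d * (2 * L + 1) ^ (d - 1) := by
  set i0 : Fin d := ⟨0, hd⟩
  have hvmem : (-(L:ℤ)) ∈ Finset.Icc (-(L:ℤ)) (L:ℤ) := by
    rw [Finset.mem_Icc]; omega
  set v0 : (Finset.Icc (-(L:ℤ)) (L:ℤ)) := ⟨-(L:ℤ), hvmem⟩ with hv0
  -- embedding of the slice into the cube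
  set emb : ({j : Fin d // j ≠ i0} → (Finset.Icc (-(L:ℤ)) (L:ℤ))) → Idx d L :=
    fun p j => if h : j = i0 then v0 else p ⟨j, h⟩ with hemb
  set R : (Idx d L → ℝ) →ₗ[ℝ] (({j : Fin d // j ≠ i0} → (Finset.Icc (-(L:ℤ)) (L:ℤ))) → ℝ) :=
    LinearMap.funLeft ℝ ℝ emb with hR
  set f := R ∘ₗ (Module.End.eigenspace (Matrix.toLin' (lap d L)) lam).subtype with hf
  have hinj : Function.Injective f := by
    rw [← LinearMap.ker_eq_bot, LinearMap.ker_eq_bot']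
    intro ⟨u, hu⟩ hfu
    have hu' : ∀ n, ∑ m, lap d L n m * u m = lam * u n := by
      intro n
      have := Module.End.mem_eigenspace_iff.mp hu
      have h2 := congrFun this n
      simpa [Matrix.toLin'_apply, Matrix.mulVec, dotProduct] using h2
    have h0 : ∀ n : Idx d L, ((n i0 : ℤ)) = -(L:ℤ) → u n = 0 := by
      intro n hn
      have h3 := congrFun hfu (fun j => n j.1)
      simp only [hf, hR, LinearMap.comp_apply, Submodule.coe_subtype,
        LinearMap.funLeft_apply, Pi.zero_apply] at h3
      have : emb (fun j => n j.1) = n := by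
        funext j
        by_cases hj : j = i0
        · subst hj; simp [hemb]; exact Subtype.ext hn.symm
        · simp [hemb, hj]
      rwa [this] at h3
    have hzero := vanish d L hd lam u hu' h0
    apply Subtype.ext
    funext n
    have : ((n i0 : ℤ)) ≤ -(L:ℤ) + (2*L : ℕ) := by
      have := (Finset.mem_Icc.mp (n i0).2).2
      push_cast
      omega
    exact hzero (2*L) n this
  have hcard : Module.finrank ℝ
      (({j : Fin d // j ≠ i0} → (Finset.Icc (-(L:ℤ)) (L:ℤ))) → ℝ)
      = (2*L+1)^(d-1) := by
    rw [Module.finrank_fintype_fun_eq_card]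
    rw [Fintype.card_fun]
    congr 1
    · rw [Fintype.card_coe, Int.card_Icc]
      omega
    · have : Fintype.card {j : Fin d // j ≠ i0} = d - 1 := by
        simp [Fintype.card_subtype_compl, Fintype.card_subtype_eq]
      rw [this]
  calc Module.finrank ℝ (Module.End.eigenspace (Matrix.toLin' (lap d L)) lam)
      ≤ (2*L+1)^(d-1) := hcard ▸ LinearMap.finrank_le_finrank_of_injective hinj
    _ ≤ d * (2*L+1)^(d-1) := Nat.le_mul_of_pos_left _ hd

end LevelRepulsion
end

section
/- Let d ≥ 1 and let E ∈ ℝ satisfy 2d−2 < |E| < 2d. Then for every f ∈ C_c^∞(ℝ), sup_{L ∈ ℕ} ∫ f(x) dμ⁰_{L,E}(x) < ∞, i.e. the total masses ∫ f dμ⁰_{L,E} are bounded uniformly in L. -/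
open MeasureTheory Finset Real
open scoped ENNReal

namespace LevelRepulsion

lemma isHermitian_of_symm {N : Type*} [Fintype N] (A : Matrix N N ℝ)
    (h : ∀ i j, A i j = A j i) : A.IsHermitian := by
  ext i j
  simpa using h j i

lemma lap_symm (d L : ℕ) (i j : Idx d L) : lap d L i j = lap d L j i := by
  unfold lap
  congr 1
  rw [eq_iff_iff]
  constructor <;> intro h <;> · rw [← h]; exact Finset.sum_congr rfl fun k _ => abs_sub_comm _ _

lemma lap_isHermitian (d L : ℕ) : (lap d L).IsHermitian :=
  isHermitian_of_symm _ (lap_symm d L)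

/-- The eigenvalue counting measure (sum of Dirac measures at the eigenvalues,
counted with multiplicity) of a hermitian (real symmetric) matrix. -/
noncomputable def specMeasure {N : Type*} [Fintype N] [DecidableEq N]
    {A : Matrix N N ℝ} (hA : A.IsHermitian) : Measure ℝ :=
  ∑ i, Measure.dirac (hA.eigenvalues i)

lemma deltaVLE_isHermitian (d L : ℕ) (E : ℝ) (V : Idx d L → ℝ) :
    (((L : ℝ) + 1) • (lap d L + Matrix.diagonal V
      - E • (1 : Matrix (Idx d L) (Idx d L) ℝ))).IsHermitian := by
  apply isHermitian_of_symm
  intro i j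
  by_cases h : i = j
  · rw [h]
  · have h' : ¬ j = i := fun hh => h hh.symm
    simp [Matrix.smul_apply, Matrix.sub_apply, Matrix.add_apply, Matrix.one_apply,
      Matrix.diagonal_apply, h, h', lap_symm d L i j]

lemma deltaLE_isHermitian (d L : ℕ) (E : ℝ) :
    (((L : ℝ) + 1) • (lap d L - E • (1 : Matrix (Idx d L) (Idx d L) ℝ))).IsHermitian := by
  apply isHermitian_of_symm
  intro i j
  by_cases h : i = j
  · rw [h]
  · have h' : ¬ j = i := fun hh => h hh.symm
    simp [Matrix.smul_apply, Matrix.sub_apply, Matrix.one_apply, h, h', lap_symm d L i j]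

/-- `μ⁰_{L,E}`, the normalized eigenvalue counting measure of `Δ_{L,E} = (L+1)(Δ_L - E)`. -/
noncomputable def mu0 (d L : ℕ) (E : ℝ) : Measure ℝ :=
  ((2 * (L : ℝ≥0∞) + 1) ^ ((d : ℤ) - 1))⁻¹ • specMeasure (deltaLE_isHermitian d L E)

/-- `μ_{L,E}` for the operator `Δ + V`: the normalized eigenvalue counting measure of
`H_{L,E} = (L+1)(Δ_L + V - E)`. -/
noncomputable def muV (d L : ℕ) (E : ℝ) (V : Idx d L → ℝ) : Measure ℝ :=
  ((2 * (L : ℝ≥0∞) + 1) ^ ((d : ℤ) - 1))⁻¹ • specMeasure (deltaVLE_isHermitian d L E V)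

/-- The sup norm `|n|` of a lattice point `n ∈ ℤ^d`, as a real number. -/
noncomputable def znorm {d : ℕ} (n : Fin d → ℤ) : ℝ :=
  ((Finset.univ.sup fun i => (n i).natAbs : ℕ) : ℝ)

/-- The inclusion `Λ_L ⊆ ℤ^d`. -/
def emb {d L : ℕ} (n : Idx d L) : Fin d → ℤ := fun i => (n i : ℤ)



section CharpolyTools
open Polynomial

lemma charpoly_conj {n : Type*} [Fintype n] [DecidableEq n]
    (P A : Matrix n n ℝ) (hP : IsUnit P) :
    (P * A * P⁻¹).charpoly = A.charpoly := by
  have hdet : IsUnit P.det := (Matrix.isUnit_iff_isUnit_det P).mp hP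
  have hPP : P * P⁻¹ = 1 := Matrix.mul_nonsing_inv P hdet
  have key : Matrix.charmatrix (P * A * P⁻¹)
      = P.map C * Matrix.charmatrix A * (P⁻¹).map C := by
    have hcomm : (P.map C) * Matrix.scalar n (X : ℝ[X]) = Matrix.scalar n (X : ℝ[X]) * (P.map C) :=
      (Matrix.scalar_commute (X : ℝ[X]) (fun r => Commute.all _ _) (P.map C)).symm
    rw [Matrix.charmatrix, Matrix.charmatrix, mul_sub, sub_mul, hcomm]
    congr 1
    · rw [mul_assoc, ← Matrix.map_mul, hPP, Matrix.map_one _ (map_zero C) (map_one C), mul_one]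
    · rw [RingHom.mapMatrix_apply, RingHom.mapMatrix_apply, Matrix.map_mul, Matrix.map_mul]
  rw [Matrix.charpoly, Matrix.charpoly, key, Matrix.det_mul, Matrix.det_mul]
  have : (P.map C).det * ((P⁻¹).map C).det = 1 := by
    rw [← Matrix.det_mul, ← Matrix.map_mul, hPP]
    simp
  calc (P.map C).det * (Matrix.charmatrix A).det * ((P⁻¹).map C).det
      = (Matrix.charmatrix A).det * ((P.map C).det * ((P⁻¹).map C).det) := by ring
    _ = (Matrix.charmatrix A).det := by rw [this, mul_one]

lemma charmatrix_diagonal {n : Type*} [Fintype n] [DecidableEq n] (μ : n → ℝ) :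
    Matrix.charmatrix (Matrix.diagonal μ) = Matrix.diagonal (fun i => (X : ℝ[X]) - C (μ i)) := by
  apply Matrix.ext; intro i j
  by_cases h : i = j
  · subst h; rw [Matrix.charmatrix_apply_eq, Matrix.diagonal_apply_eq, Matrix.diagonal_apply_eq]
  · rw [Matrix.charmatrix_apply_ne _ _ _ h, Matrix.diagonal_apply_ne _ h,
      Matrix.diagonal_apply_ne _ h]
    simp

lemma charpoly_diagonal {n : Type*} [Fintype n] [DecidableEq n] (μ : n → ℝ) :
    (Matrix.diagonal μ).charpoly = ∏ i, ((X : ℝ[X]) - C (μ i)) := by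
  rw [Matrix.charpoly, charmatrix_diagonal, Matrix.det_diagonal]

lemma charpoly_eq_prod_of_eigen {n : Type*} [Fintype n] [DecidableEq n]
    {A : Matrix n n ℝ} (μ : n → ℝ) (P : Matrix n n ℝ) (hP : IsUnit P)
    (h : P * A = Matrix.diagonal μ * P) :
    A.charpoly = ∏ i, ((X : ℝ[X]) - C (μ i)) := by
  have hdet : IsUnit P.det := (Matrix.isUnit_iff_isUnit_det P).mp hP
  have hPinv : IsUnit P⁻¹ := by
    apply (Matrix.isUnit_iff_isUnit_det _).mpr
    rw [Matrix.det_nonsing_inv]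
    simpa using hdet
  have haux : P⁻¹ * (P * A) = A := by
    rw [← mul_assoc, Matrix.nonsing_inv_mul _ hdet, one_mul]
  have hA : A = P⁻¹ * Matrix.diagonal μ * (P⁻¹)⁻¹ := by
    rw [Matrix.nonsing_inv_nonsing_inv _ hdet, mul_assoc, ← h]
    exact haux.symm
  rw [hA, charpoly_conj _ _ hPinv, charpoly_diagonal]

lemma charpoly_eq_prod_eigenvalues {n : Type*} [Fintype n] [DecidableEq n]
    {A : Matrix n n ℝ} (hA : A.IsHermitian) :
    A.charpoly = ∏ i, ((X : ℝ[X]) - C (hA.eigenvalues i)) := by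
  have hsp := hA.spectral_theorem
  set U : Matrix n n ℝ := (Matrix.IsHermitian.eigenvectorUnitary hA : Matrix n n ℝ) with hU
  have hmem := (Matrix.IsHermitian.eigenvectorUnitary hA).2
  have h1 : U * star U = 1 := (Matrix.mem_unitaryGroup_iff).mp hmem
  have hUunit : IsUnit U := by
    apply (Matrix.isUnit_iff_isUnit_det U).mpr
    have : U.det * (star U).det = 1 := by rw [← Matrix.det_mul, h1, Matrix.det_one]
    exact isUnit_iff_exists_inv.mpr ⟨_, this⟩
  have hinv : U⁻¹ = star U := Matrix.inv_eq_right_inv h1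
  have hD : (RCLike.ofReal ∘ hA.eigenvalues : n → ℝ) = hA.eigenvalues := by
    funext i; simp
  have e1 : A.charpoly = (U * Matrix.diagonal (RCLike.ofReal ∘ hA.eigenvalues) * U⁻¹).charpoly := by
    congr 1
    rw [hinv]
    exact hsp
  rw [e1, charpoly_conj _ _ hUunit, hD, charpoly_diagonal]

lemma eigenvalues_multiset_eq {n : Type*} [Fintype n] [DecidableEq n]
    {A : Matrix n n ℝ} (hA : A.IsHermitian) (μ : n → ℝ) (P : Matrix n n ℝ)
    (hP : IsUnit P) (hPA : P * A = Matrix.diagonal μ * P) :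
    Finset.univ.val.map hA.eigenvalues = Finset.univ.val.map μ := by
  have h3 : ∏ i, ((X : ℝ[X]) - C (hA.eigenvalues i)) = ∏ i, ((X : ℝ[X]) - C (μ i)) := by
    rw [← charpoly_eq_prod_eigenvalues hA, charpoly_eq_prod_of_eigen μ P hP hPA]
  have key : ∀ g : n → ℝ, (∏ i, ((X : ℝ[X]) - C (g i))).roots = Finset.univ.val.map g := by
    intro g
    have := Polynomial.roots_multiset_prod_X_sub_C (Finset.univ.val.map g)
    rw [Multiset.map_map] at this
    rw [Finset.prod_eq_multiset_prod]
    exact this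
  have := key hA.eigenvalues
  rw [h3, key μ] at this
  exact this.symm

lemma sum_eigenvalues_eq {n : Type*} [Fintype n] [DecidableEq n]
    {A : Matrix n n ℝ} (hA : A.IsHermitian) (μ : n → ℝ) (P : Matrix n n ℝ)
    (hP : IsUnit P) (hPA : P * A = Matrix.diagonal μ * P) (g : ℝ → ℝ) :
    ∑ i, g (hA.eigenvalues i) = ∑ i, g (μ i) := by
  have h := eigenvalues_multiset_eq hA μ P hP hPA
  have key : ∀ w : n → ℝ, ∑ i, g (w i) = ((Finset.univ.val.map w).map g).sum := by
    intro w
    rw [Multiset.map_map]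
    rfl
  rw [key, key, h]

end CharpolyTools




/-- The 1D frequency `β j = (j+1)π/(2L+2)`. -/
noncomputable def freq (L : ℕ) (j : Fin (2*L+1)) : ℝ := ((j:ℕ)+1) * π / (2*(L:ℝ)+2)

/-- The 1D sine eigenvector, extended to all of `ℤ`. -/
noncomputable def sw (L : ℕ) (j : Fin (2*L+1)) (t : ℤ) : ℝ :=
  Real.sin (freq L j * ((t:ℝ) + L + 1))

lemma freq_pos (L : ℕ) (j : Fin (2*L+1)) : 0 < freq L j := by
  apply div_pos
  · positivity
  · positivity

lemma freq_lt_pi (L : ℕ) (j : Fin (2*L+1)) : freq L j < π := by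
  rw [freq, div_lt_iff₀ (by positivity)]
  have hj : ((j:ℕ):ℝ) + 1 ≤ 2*(L:ℝ)+1 := by
    have h := Nat.succ_le_of_lt j.2
    exact_mod_cast h
  nlinarith [Real.pi_pos]

lemma sw_bot (L : ℕ) (j : Fin (2*L+1)) : sw L j (-(L:ℤ) - 1) = 0 := by
  have : ((-(L:ℤ) - 1 : ℤ) : ℝ) + L + 1 = 0 := by push_cast; ring
  rw [sw, this, mul_zero, Real.sin_zero]

lemma sw_top (L : ℕ) (j : Fin (2*L+1)) : sw L j ((L:ℤ) + 1) = 0 := by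
  have h2 : (2*(L:ℝ)+2) ≠ 0 := by positivity
  have : freq L j * ((((L:ℤ)+1 : ℤ) : ℝ) + L + 1) = ((j:ℕ)+1) * π := by
    rw [freq]
    push_cast
    field_simp
    ring
  rw [sw, this]
  have := Real.sin_nat_mul_pi ((j:ℕ)+1)
  push_cast at this ⊢
  exact this

lemma sw_rec (L : ℕ) (j : Fin (2*L+1)) (t : ℤ) :
    sw L j (t+1) + sw L j (t-1) = 2 * Real.cos (freq L j) * sw L j t := by
  have e1 : freq L j * (((t+1 : ℤ) : ℝ) + L + 1) = freq L j * ((t:ℝ) + L + 1) + freq L j := by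
    push_cast; ring
  have e2 : freq L j * (((t-1 : ℤ) : ℝ) + L + 1) = freq L j * ((t:ℝ) + L + 1) - freq L j := by
    push_cast; ring
  rw [sw, sw, sw, e1, e2, Real.sin_add, Real.sin_sub]
  ring

/-- 1D: summing the extended eigenvector over neighbors within the box. -/
lemma sum_nbr (L : ℕ) (j : Fin (2*L+1)) (t : ℤ) (ht : t ∈ Finset.Icc (-(L:ℤ)) (L:ℤ)) :
    ∑ s ∈ Finset.Icc (-(L:ℤ)) (L:ℤ), (if |t - s| = 1 then sw L j s else 0)
      = 2 * Real.cos (freq L j) * sw L j t := by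
  rw [Finset.mem_Icc] at ht
  have split : ∀ s ∈ Finset.Icc (-(L:ℤ)) (L:ℤ), (if |t - s| = 1 then sw L j s else 0)
      = (if s = t - 1 then sw L j s else 0) + (if s = t + 1 then sw L j s else 0) := by
    intro s _
    have habs : |t - s| = 1 ↔ (t - s = 1 ∨ t - s = -1) := abs_eq (by norm_num)
    by_cases h1 : s = t - 1
    · have h2 : ¬ s = t + 1 := by omega
      have h3 : |t - s| = 1 := habs.mpr (by omega)
      rw [if_pos h3, if_pos h1, if_neg h2, add_zero]
    · by_cases h2 : s = t + 1
      · have h3 : |t - s| = 1 := habs.mpr (by omega)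
        rw [if_pos h3, if_neg h1, if_pos h2, zero_add]
      · have h3 : ¬ |t - s| = 1 := fun hc => by rcases habs.mp hc with h | h <;> omega
        rw [if_neg h3, if_neg h1, if_neg h2, add_zero]
  rw [Finset.sum_congr rfl split, Finset.sum_add_distrib,
    Finset.sum_ite_eq' (Finset.Icc (-(L:ℤ)) (L:ℤ)) (t-1) (fun s => sw L j s),
    Finset.sum_ite_eq' (Finset.Icc (-(L:ℤ)) (L:ℤ)) (t+1) (fun s => sw L j s)]
  have e1 : (if t - 1 ∈ Finset.Icc (-(L:ℤ)) (L:ℤ) then sw L j (t-1) else 0) = sw L j (t-1) := by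
    by_cases h : t - 1 ∈ Finset.Icc (-(L:ℤ)) (L:ℤ)
    · simp [h]
    · rw [Finset.mem_Icc] at h
      push_neg at h
      have : t - 1 = -(L:ℤ) - 1 := by omega
      rw [if_neg (by rw [Finset.mem_Icc]; omega), this, sw_bot]
  have e2 : (if t + 1 ∈ Finset.Icc (-(L:ℤ)) (L:ℤ) then sw L j (t+1) else 0) = sw L j (t+1) := by
    by_cases h : t + 1 ∈ Finset.Icc (-(L:ℤ)) (L:ℤ)
    · simp [h]
    · rw [Finset.mem_Icc] at h
      push_neg at h
      have : t + 1 = (L:ℤ) + 1 := by omega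
      rw [if_neg (by rw [Finset.mem_Icc]; omega), this, sw_top]
  rw [e1, e2, ← sw_rec]
  ring

/-- The d-dimensional eigenvector indexed by `κ`. -/
noncomputable def eVec (d L : ℕ) (κ : Fin d → Fin (2*L+1)) : Idx d L → ℝ :=
  fun n => ∏ i, sw L (κ i) ((n i : ℤ))

/-- The d-dimensional eigenvalue indexed by `κ`. -/
noncomputable def eVal (d L : ℕ) (κ : Fin d → Fin (2*L+1)) : ℝ :=
  ∑ i, 2 * Real.cos (freq L (κ i))

lemma lap_decomp (d L : ℕ) (n m : Idx d L) :
    lap d L n m = ∑ i, (if ((∀ j, j ≠ i → m j = n j) ∧ |((n i : ℤ)) - ((m i : ℤ))| = 1)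
      then (1:ℝ) else 0) := by
  rw [lap]
  by_cases h : (∑ i, |((n i : ℤ)) - ((m i : ℤ))|) = 1
  · rw [if_pos h]
    have habs : ∀ j, 0 ≤ |((n j : ℤ)) - ((m j : ℤ))| := fun j => abs_nonneg _
    have hex : ∃ i, |((n i : ℤ)) - ((m i : ℤ))| ≠ 0 := by
      by_contra hc
      push_neg at hc
      rw [Finset.sum_eq_zero (fun j _ => hc j)] at h
      exact one_ne_zero h.symm
    obtain ⟨i, hi⟩ := hex
    have hle : |((n i : ℤ)) - ((m i : ℤ))| ≤ 1 := by
      rw [← h]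
      exact Finset.single_le_sum (fun j _ => habs j) (Finset.mem_univ i)
    have hi1 : |((n i : ℤ)) - ((m i : ℤ))| = 1 := by
      have h0 := habs i
      omega
    have hrest : ∀ j, j ≠ i → m j = n j := by
      intro j hj
      have hsum : |((n i : ℤ)) - ((m i : ℤ))| + |((n j : ℤ)) - ((m j : ℤ))|
          ≤ ∑ l, |((n l : ℤ)) - ((m l : ℤ))| := by
        have : ({i, j} : Finset (Fin d)) ⊆ Finset.univ := Finset.subset_univ _
        calc |((n i : ℤ)) - ((m i : ℤ))| + |((n j : ℤ)) - ((m j : ℤ))|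
            = ∑ l ∈ ({i, j} : Finset (Fin d)), |((n l : ℤ)) - ((m l : ℤ))| := by
              rw [Finset.sum_pair (Ne.symm hj)]
          _ ≤ _ := Finset.sum_le_sum_of_subset_of_nonneg this (fun l _ _ => habs l)
      rw [h, hi1] at hsum
      have h0 := habs j
      have hz : |((n j : ℤ)) - ((m j : ℤ))| = 0 := by omega
      have hz2 := abs_eq_zero.mp hz
      have : ((n j : ℤ)) = ((m j : ℤ)) := by omega
      exact Subtype.ext this.symm
    rw [Finset.sum_eq_single i]
    · rw [if_pos ⟨hrest, hi1⟩]
    · intro j _ hj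
      rw [if_neg]
      rintro ⟨hall, hj1⟩
      have := hall i (Ne.symm hj)
      rw [this] at hi1
      simp at hi1
    · intro hc
      exact absurd (Finset.mem_univ i) hc
  · rw [if_neg h]
    symm
    apply Finset.sum_eq_zero
    intro i _
    rw [if_neg]
    rintro ⟨hall, hi1⟩
    apply h
    rw [Finset.sum_eq_single i]
    · exact hi1
    · intro j _ hj
      rw [hall j hj]
      simp
    · intro hc
      exact absurd (Finset.mem_univ i) hc

lemma lap_mulVec (d L : ℕ) (κ : Fin d → Fin (2*L+1)) :
    (lap d L).mulVec (eVec d L κ) = eVal d L κ • eVec d L κ := by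
  funext n
  rw [Matrix.mulVec, dotProduct]
  calc ∑ m, lap d L n m * eVec d L κ m
      = ∑ m, ∑ i, (if ((∀ j, j ≠ i → m j = n j) ∧ |((n i : ℤ)) - ((m i : ℤ))| = 1)
          then (1:ℝ) else 0) * eVec d L κ m := by
        refine Finset.sum_congr rfl (fun m _ => ?_)
        rw [lap_decomp, Finset.sum_mul]
    _ = ∑ i, ∑ m, (if ((∀ j, j ≠ i → m j = n j) ∧ |((n i : ℤ)) - ((m i : ℤ))| = 1)
          then (1:ℝ) else 0) * eVec d L κ m := Finset.sum_comm
    _ = ∑ i, (2 * Real.cos (freq L (κ i))) * eVec d L κ n := by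
        refine Finset.sum_congr rfl (fun i _ => ?_)
        -- reduce the inner sum over m to a 1D sum over the i-th coordinate
        have himg : ∀ m : Idx d L,
            (if ((∀ j, j ≠ i → m j = n j) ∧ |((n i : ℤ)) - ((m i : ℤ))| = 1)
              then (1:ℝ) else 0) * eVec d L κ m
            = ∑ s : (Finset.Icc (-(L:ℤ)) (L:ℤ)),
                (if m = Function.update n i s ∧ |((n i : ℤ)) - (s : ℤ)| = 1
                  then eVec d L κ m else 0) := by
          intro m
          by_cases hm : (∀ j, j ≠ i → m j = n j) ∧ |((n i : ℤ)) - ((m i : ℤ))| = 1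
          · rw [if_pos hm, one_mul]
            have hup : m = Function.update n i (m i) := by
              funext j
              by_cases hj : j = i
              · subst hj; rw [Function.update_self]
              · rw [Function.update_of_ne hj]; exact hm.1 j hj
            rw [Finset.sum_eq_single (m i)]
            · rw [if_pos ⟨hup, hm.2⟩]
            · intro s _ hs
              rw [if_neg]
              rintro ⟨hms, -⟩
              apply hs
              rw [hms, Function.update_self]
            · intro hc
              exact absurd (Finset.mem_univ (m i)) hc
          · rw [if_neg hm, zero_mul]
            symm
            apply Finset.sum_eq_zero
            intro s _
            rw [if_neg]
            rintro ⟨hms, hs1⟩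
            apply hm
            subst hms
            constructor
            · intro j hj
              rw [Function.update_of_ne hj]
            · rw [Function.update_self]
              exact hs1
        rw [Finset.sum_congr rfl (fun m _ => himg m), Finset.sum_comm]
        have hinner : ∀ s : (Finset.Icc (-(L:ℤ)) (L:ℤ)),
            ∑ m : Idx d L, (if m = Function.update n i s ∧ |((n i : ℤ)) - (s : ℤ)| = 1
              then eVec d L κ m else 0)
            = (if |((n i : ℤ)) - (s : ℤ)| = 1 then sw L (κ i) (s : ℤ) else 0)
                * ∏ j ∈ Finset.univ.erase i, sw L (κ j) ((n j : ℤ)) := by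
          intro s
          rw [Finset.sum_eq_single (Function.update n i s)]
          · by_cases hs : |((n i : ℤ)) - (s : ℤ)| = 1
            · rw [if_pos ⟨rfl, hs⟩, if_pos hs, eVec]
              rw [← Finset.mul_prod_erase Finset.univ _ (Finset.mem_univ i),
                Function.update_self]
              congr 1
              apply Finset.prod_congr rfl
              intro j hj
              rw [Function.update_of_ne (Finset.ne_of_mem_erase hj)]
            · rw [if_neg (fun hc => hs hc.2), if_neg hs, zero_mul]
          · intro m _ hm
            rw [if_neg (fun hc => hm hc.1)]
          · intro hc
            exact absurd (Finset.mem_univ _) hc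
        rw [Finset.sum_congr rfl (fun s _ => hinner s), ← Finset.sum_mul]
        have h1d : ∑ s : (Finset.Icc (-(L:ℤ)) (L:ℤ)),
            (if |((n i : ℤ)) - (s : ℤ)| = 1 then sw L (κ i) (s : ℤ) else 0)
            = 2 * Real.cos (freq L (κ i)) * sw L (κ i) ((n i : ℤ)) := by
          have h := sum_nbr L (κ i) ((n i : ℤ)) (n i).2
          rw [← Finset.sum_coe_sort (Finset.Icc (-(L:ℤ)) (L:ℤ))
            (fun s => if |((n i : ℤ)) - s| = 1 then sw L (κ i) s else 0)] at h
          exact h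
        rw [h1d, eVec, mul_assoc]
        congr 1
        exact Finset.mul_prod_erase Finset.univ (fun j => sw L (κ j) ((n j : ℤ)))
          (Finset.mem_univ i)
    _ = eVal d L κ • eVec d L κ n := by
        rw [eVal, smul_eq_mul, Finset.sum_mul]

/-- The index set `{-L, ..., L}` as a type. -/
noncomputable abbrev IccT (L : ℕ) := (Finset.Icc (-(L:ℤ)) (L:ℤ))

lemma card_IccT (L : ℕ) : Fintype.card (IccT L) = 2*L+1 := by
  rw [Fintype.card_coe, Int.card_Icc]
  omega

/-- The 1D tridiagonal matrix. -/
def oneD (L : ℕ) : Matrix (IccT L) (IccT L) ℝ :=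
  fun t s => if |(t:ℤ) - (s:ℤ)| = 1 then 1 else 0

lemma oneD_mulVec (L : ℕ) (j : Fin (2*L+1)) :
    (oneD L).mulVec (fun t => sw L j (t:ℤ))
      = (2 * Real.cos (freq L j)) • (fun t : IccT L => sw L j (t:ℤ)) := by
  funext t
  rw [Matrix.mulVec, dotProduct]
  have h := sum_nbr L j (t:ℤ) t.2
  rw [← Finset.sum_coe_sort (Finset.Icc (-(L:ℤ)) (L:ℤ))
    (fun s => if |(t:ℤ) - s| = 1 then sw L j s else 0)] at h
  calc ∑ s : IccT L, oneD L t s * sw L j (s:ℤ)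
      = ∑ s : IccT L, (if |(t:ℤ) - (s:ℤ)| = 1 then sw L j (s:ℤ) else 0) := by
        refine Finset.sum_congr rfl (fun s _ => ?_)
        rw [oneD]
        by_cases hs : |(t:ℤ) - (s:ℤ)| = 1
        · rw [if_pos hs, if_pos hs, one_mul]
        · rw [if_neg hs, if_neg hs, zero_mul]
    _ = 2 * Real.cos (freq L j) * sw L j (t:ℤ) := h

lemma sw_neL_pos (L : ℕ) (j : Fin (2*L+1)) : 0 < sw L j (-(L:ℤ)) := by
  have : freq L j * (((-(L:ℤ) : ℤ) : ℝ) + L + 1) = freq L j := by push_cast; ring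
  rw [sw]
  rw [this]
  exact Real.sin_pos_of_pos_of_lt_pi (freq_pos L j) (freq_lt_pi L j)

lemma cos_freq_injective (L : ℕ) :
    Function.Injective (fun j : Fin (2*L+1) => 2 * Real.cos (freq L j)) := by
  intro a b hab
  simp only [mul_eq_mul_left_iff] at hab
  have hcos : Real.cos (freq L a) = Real.cos (freq L b) := by
    rcases hab with h | h
    · exact h
    · norm_num at h
  have hmem : ∀ j : Fin (2*L+1), freq L j ∈ Set.Icc 0 π := fun j =>
    ⟨(freq_pos L j).le, (freq_lt_pi L j).le⟩
  have := Real.injOn_cos (hmem a) (hmem b) hcos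
  rw [freq, freq] at this
  have h2 : (2*(L:ℝ)+2) ≠ 0 := by positivity
  have : ((a:ℕ):ℝ) = ((b:ℕ):ℝ) := by
    rw [div_left_inj' h2, mul_left_inj' Real.pi_ne_zero] at this
    linarith
  exact Fin.ext (by exact_mod_cast this)

lemma sineRows_linearIndependent (L : ℕ) :
    LinearIndependent ℝ (fun j : Fin (2*L+1) => (fun t : IccT L => sw L j (t:ℤ))) := by
  apply Module.End.eigenvectors_linearIndependent' (Matrix.mulVecLin (oneD L))
    (fun j : Fin (2*L+1) => 2 * Real.cos (freq L j)) (cos_freq_injective L)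
  intro j
  constructor
  · rw [Module.End.mem_eigenspace_iff]
    exact oneD_mulVec L j
  · intro hc
    have := congrFun hc ⟨-(L:ℤ), by rw [Finset.mem_Icc]; omega⟩
    exact absurd this (ne_of_gt (sw_neL_pos L j))

/-- The index equivalence `Fin (2L+1) ≃ {-L,...,L}`. -/
noncomputable def idxEquiv (L : ℕ) : Fin (2*L+1) ≃ IccT L :=
  Fintype.equivOfCardEq (by rw [card_IccT, Fintype.card_fin])

/-- The square 1D sine matrix. -/
noncomputable def sineM (L : ℕ) : Matrix (IccT L) (IccT L) ℝ :=
  fun a b => sw L ((idxEquiv L).symm a) (b:ℤ)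

lemma sineM_isUnit (L : ℕ) : IsUnit (sineM L) := by
  rw [← Matrix.linearIndependent_rows_iff_isUnit]
  have := (sineRows_linearIndependent L).comp ((idxEquiv L).symm)
    (idxEquiv L).symm.injective
  exact this

/-- The big eigenvector matrix in dimension `d`, with rows indexed by `Idx d L`. -/
noncomputable def bigP (d L : ℕ) : Matrix (Idx d L) (Idx d L) ℝ :=
  fun n m => ∏ i, sineM L (n i) (m i)

noncomputable def bigQ (d L : ℕ) : Matrix (Idx d L) (Idx d L) ℝ :=
  fun n m => ∏ i, (sineM L)⁻¹ (n i) (m i)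

lemma prod_entry_one {d L : ℕ} (n m : Idx d L)
    (hM : ∀ a b : IccT L, True) :
    (∏ i, (1 : Matrix (IccT L) (IccT L) ℝ) (n i) (m i)) = (1 : Matrix (Idx d L) (Idx d L) ℝ) n m := by
  by_cases h : n = m
  · subst h
    rw [Matrix.one_apply_eq]
    apply Finset.prod_eq_one
    intro i _
    rw [Matrix.one_apply_eq]
  · rw [Matrix.one_apply_ne h]
    have : ∃ i, n i ≠ m i := by
      by_contra hc
      push_neg at hc
      exact h (funext hc)
    obtain ⟨i, hi⟩ := this
    exact Finset.prod_eq_zero (Finset.mem_univ i) (Matrix.one_apply_ne hi)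

lemma prod_mul_matrix {d L : ℕ} (A B : Matrix (IccT L) (IccT L) ℝ) (n m : Idx d L) :
    ∑ r : Idx d L, (∏ i, A (n i) (r i)) * (∏ i, B (r i) (m i))
      = ∏ i, (A * B) (n i) (m i) := by
  have : ∀ r : Idx d L, (∏ i, A (n i) (r i)) * (∏ i, B (r i) (m i))
      = ∏ i, (A (n i) (r i) * B (r i) (m i)) := by
    intro r
    rw [Finset.prod_mul_distrib]
  rw [Finset.sum_congr rfl (fun r _ => this r)]
  rw [← Fintype.prod_sum (fun i (t : IccT L) => A (n i) t * B t (m i))]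
  refine Finset.prod_congr rfl (fun i _ => ?_)
  rw [Matrix.mul_apply]

lemma bigP_mul_bigQ (d L : ℕ) : bigP d L * bigQ d L = 1 := by
  have hdet : IsUnit (sineM L).det := (Matrix.isUnit_iff_isUnit_det _).mp (sineM_isUnit L)
  apply Matrix.ext
  intro n m
  rw [Matrix.mul_apply]
  calc ∑ r : Idx d L, bigP d L n r * bigQ d L r m
      = ∏ i, ((sineM L) * (sineM L)⁻¹) (n i) (m i) := prod_mul_matrix _ _ n m
    _ = ∏ i, (1 : Matrix (IccT L) (IccT L) ℝ) (n i) (m i) := by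
        rw [Matrix.mul_nonsing_inv _ hdet]
    _ = (1 : Matrix (Idx d L) (Idx d L) ℝ) n m := prod_entry_one n m (fun _ _ => trivial)

lemma bigQ_mul_bigP (d L : ℕ) : bigQ d L * bigP d L = 1 := by
  have hdet : IsUnit (sineM L).det := (Matrix.isUnit_iff_isUnit_det _).mp (sineM_isUnit L)
  apply Matrix.ext
  intro n m
  rw [Matrix.mul_apply]
  calc ∑ r : Idx d L, bigQ d L n r * bigP d L r m
      = ∏ i, ((sineM L)⁻¹ * (sineM L)) (n i) (m i) := prod_mul_matrix _ _ n m
    _ = ∏ i, (1 : Matrix (IccT L) (IccT L) ℝ) (n i) (m i) := by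
        rw [Matrix.nonsing_inv_mul _ hdet]
    _ = (1 : Matrix (Idx d L) (Idx d L) ℝ) n m := prod_entry_one n m (fun _ _ => trivial)

lemma bigP_isUnit (d L : ℕ) : IsUnit (bigP d L) :=
  ⟨⟨bigP d L, bigQ d L, bigP_mul_bigQ d L, bigQ_mul_bigP d L⟩, rfl⟩

/-- The eigenvalue attached to the row `n` of `bigP`. -/
noncomputable def rowVal (d L : ℕ) (n : Idx d L) : ℝ :=
  eVal d L (fun i => (idxEquiv L).symm (n i))

lemma bigP_row (d L : ℕ) (n : Idx d L) :
    bigP d L n = eVec d L (fun i => (idxEquiv L).symm (n i)) := rfl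


lemma bigP_mul_lap (d L : ℕ) :
    bigP d L * lap d L = Matrix.diagonal (rowVal d L) * bigP d L := by
  apply Matrix.ext
  intro n m
  rw [Matrix.mul_apply, Matrix.diagonal_mul]
  have h := congrFun (lap_mulVec d L (fun i => (idxEquiv L).symm (n i))) m
  rw [Matrix.mulVec, dotProduct] at h
  calc ∑ r, bigP d L n r * lap d L r m
      = ∑ r, lap d L m r * eVec d L (fun i => (idxEquiv L).symm (n i)) r := by
        refine Finset.sum_congr rfl (fun r _ => ?_)
        rw [bigP_row, lap_symm d L r m, mul_comm]
    _ = rowVal d L n * bigP d L n m := by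
        rw [h, bigP_row, Pi.smul_apply, smul_eq_mul, rowVal]



lemma diagonal_shift (d L : ℕ) (E : ℝ) :
    Matrix.diagonal (fun n : Idx d L => ((L:ℝ)+1) * (rowVal d L n - E))
      = ((L:ℝ)+1) • (Matrix.diagonal (rowVal d L) - E • (1 : Matrix (Idx d L) (Idx d L) ℝ)) := by
  apply Matrix.ext
  intro n m
  by_cases h : n = m
  · subst h
    simp [Matrix.diagonal_apply_eq, Matrix.one_apply_eq]
  · simp [Matrix.diagonal_apply_ne _ h, Matrix.one_apply_ne h]

lemma bigP_mul_delta (d L : ℕ) (E : ℝ) :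
    bigP d L * (((L:ℝ)+1) • (lap d L - E • (1 : Matrix (Idx d L) (Idx d L) ℝ)))
      = Matrix.diagonal (fun n => ((L:ℝ)+1) * (rowVal d L n - E)) * bigP d L := by
  rw [diagonal_shift, Matrix.mul_smul, Matrix.smul_mul, mul_sub, sub_mul, bigP_mul_lap]
  congr 2
  rw [Matrix.mul_smul, Matrix.smul_mul, mul_one, Matrix.one_mul]

lemma spec_sum (d L : ℕ) (E : ℝ) (g : ℝ → ℝ) :
    ∑ i, g ((deltaLE_isHermitian d L E).eigenvalues i)
      = ∑ κ : Fin d → Fin (2*L+1), g (((L:ℝ)+1) * (eVal d L κ - E)) := by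
  rw [sum_eigenvalues_eq (deltaLE_isHermitian d L E) _ (bigP d L) (bigP_isUnit d L)
    (bigP_mul_delta d L E) (fun x => g x)]
  exact Fintype.sum_equiv (Equiv.piCongrRight (fun _ : Fin d => (idxEquiv L).symm))
    _ _ (fun n => rfl)

lemma integral_mu0 (d L : ℕ) (E : ℝ) (f : ℝ → ℝ) (hf : Continuous f)
    (hsupp : HasCompactSupport f) :
    ∫ x, f x ∂ (mu0 d L E)
      = (((2 * (L : ℝ≥0∞) + 1) ^ ((d : ℤ) - 1))⁻¹).toReal
        * ∑ κ : Fin d → Fin (2*L+1), f (((L:ℝ)+1) * (eVal d L κ - E)) := by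
  rw [mu0, integral_smul_measure, specMeasure,
    integral_finset_sum_measure (fun i _ => hf.integrable_of_hasCompactSupport hsupp)]
  simp_rw [integral_dirac]
  rw [spec_sum d L E f, smul_eq_mul]

lemma norm_toReal (d L : ℕ) (hd : 1 ≤ d) :
    (((2 * (L : ℝ≥0∞) + 1) ^ ((d : ℤ) - 1))⁻¹).toReal = ((2*(L:ℝ)+1) ^ (d-1))⁻¹ := by
  have h1 : ((d:ℤ) - 1) = ((d - 1 : ℕ) : ℤ) := by omega
  have h2 : (2 * (L : ℝ≥0∞) + 1) = ((2*L+1 : ℕ) : ℝ≥0∞) := by push_cast; ring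
  rw [h1, zpow_natCast, h2, ENNReal.toReal_inv, ENNReal.toReal_pow, ENNReal.toReal_natCast]
  congr 2
  push_cast
  ring


lemma freq_mem (L : ℕ) (j : Fin (2*L+1)) : freq L j ∈ Set.Icc 0 π :=
  ⟨(freq_pos L j).le, (freq_lt_pi L j).le⟩

lemma sin_lower {x ε : ℝ} (hx : x ∈ Set.Icc 0 π) (hε : 0 < ε) (hε2 : ε ≤ 2)
    (hcx : |Real.cos x| ≤ 1 - ε/2) : Real.sqrt (ε/2) ≤ Real.sin x := by
  have hs : 0 ≤ Real.sin x := Real.sin_nonneg_of_nonneg_of_le_pi hx.1 hx.2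
  have h1 : Real.sin x ^ 2 = 1 - Real.cos x ^ 2 := by
    have := Real.sin_sq_add_cos_sq x
    linarith
  have h2 : Real.cos x ^ 2 ≤ (1 - ε/2)^2 := by
    rw [← sq_abs]
    apply pow_le_pow_left₀ (abs_nonneg _) hcx
  have h3 : ε/2 ≤ Real.sin x ^ 2 := by nlinarith
  calc Real.sqrt (ε/2) ≤ Real.sqrt (Real.sin x ^ 2) := Real.sqrt_le_sqrt h3
    _ = |Real.sin x| := Real.sqrt_sq_eq_abs _
    _ = Real.sin x := abs_of_nonneg hs

lemma cos_gap_aux {a b ε : ℝ} (ha : a ∈ Set.Icc 0 π) (hb : b ∈ Set.Icc 0 π)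
    (hε : 0 < ε) (hε2 : ε ≤ 2) (hab : a < b)
    (hca : |Real.cos a| ≤ 1 - ε/2) (hcb : |Real.cos b| ≤ 1 - ε/2) :
    Real.sqrt (ε/2) * |a - b| ≤ |Real.cos a - Real.cos b| := by
  obtain ⟨ξ, hξ, hslope⟩ := exists_hasDerivAt_eq_slope Real.cos (fun x => -Real.sin x) hab
    Real.continuous_cos.continuousOn (fun x _ => Real.hasDerivAt_cos x)
  have hba : (0:ℝ) < b - a := by linarith
  have hdiff : Real.cos b - Real.cos a = -Real.sin ξ * (b - a) := by
    rw [hslope]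
    field_simp
  have hξI : ξ ∈ Set.Icc 0 π := ⟨ha.1.trans hξ.1.le, hξ.2.le.trans hb.2⟩
  have hc1 : Real.cos ξ ≤ Real.cos a :=
    Real.cos_le_cos_of_nonneg_of_le_pi ha.1 hξI.2 hξ.1.le
  have hc2 : Real.cos b ≤ Real.cos ξ :=
    Real.cos_le_cos_of_nonneg_of_le_pi hξI.1 hb.2 hξ.2.le
  have hcξ : |Real.cos ξ| ≤ 1 - ε/2 := by
    rw [abs_le] at hca hcb ⊢
    constructor
    · linarith [hcb.1]
    · linarith [hca.2]
  have hsin : Real.sqrt (ε/2) ≤ Real.sin ξ := sin_lower hξI hε hε2 hcξ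
  have habs : |a - b| = b - a := by rw [abs_sub_comm]; exact abs_of_pos hba
  have habs2 : |Real.cos a - Real.cos b| = Real.sin ξ * (b - a) := by
    rw [abs_sub_comm, hdiff]
    rw [abs_mul, abs_neg, abs_of_pos hba, abs_of_nonneg
      (Real.sin_nonneg_of_nonneg_of_le_pi hξI.1 hξI.2)]
  rw [habs, habs2]
  apply mul_le_mul_of_nonneg_right hsin hba.le

lemma cos_gap {a b ε : ℝ} (ha : a ∈ Set.Icc 0 π) (hb : b ∈ Set.Icc 0 π)
    (hε : 0 < ε) (hε2 : ε ≤ 2)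
    (hca : |Real.cos a| ≤ 1 - ε/2) (hcb : |Real.cos b| ≤ 1 - ε/2) :
    Real.sqrt (ε/2) * |a - b| ≤ |Real.cos a - Real.cos b| := by
  rcases lt_trichotomy a b with h | h | h
  · exact cos_gap_aux ha hb hε hε2 h hca hcb
  · subst h; simp
  · have := cos_gap_aux hb ha hε hε2 h hcb hca
    rw [abs_sub_comm b a, abs_sub_comm (Real.cos b)] at this
    exact this

lemma card_zeroed (dd N : ℕ) (i : Fin dd) (z : Fin N) :
    (Finset.univ.filter (fun g : Fin dd → Fin N => g i = z)).card = N ^ (dd - 1) := by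
  rw [← Fintype.card_subtype]
  have e : {g : Fin dd → Fin N // g i = z} ≃ ({j : Fin dd // j ≠ i} → Fin N) :=
    { toFun := fun g j => g.1 j.1
      invFun := fun h => ⟨fun j => if hj : j = i then z else h ⟨j, hj⟩, by simp⟩
      left_inv := fun g => by
        apply Subtype.ext
        funext j
        by_cases hj : j = i
        · subst hj; simpa using g.2.symm
        · simp [hj]
      right_inv := fun h => by
        funext j
        simp [j.2] }
  rw [Fintype.card_congr e, Fintype.card_fun, Fintype.card_fin]
  congr 1
  have h1 : Fintype.card {j : Fin dd // j = i} = 1 := Fintype.card_subtype_eq i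
  have h2 := Fintype.card_subtype_compl (fun j : Fin dd => j = i)
  rw [h1, Fintype.card_fin] at h2
  exact h2

lemma eVal_apart {d L : ℕ} (κ κ' : Fin d → Fin (2*L+1)) (i : Fin d)
    (hagree : ∀ j, j ≠ i → κ j = κ' j) :
    eVal d L κ - eVal d L κ' = 2*Real.cos (freq L (κ i)) - 2*Real.cos (freq L (κ' i)) := by
  rw [eVal, eVal, ← Finset.add_sum_erase _ _ (Finset.mem_univ i),
    ← Finset.add_sum_erase _ (fun j => 2*Real.cos (freq L (κ' j))) (Finset.mem_univ i)]
  have heq : ∑ j ∈ Finset.univ.erase i, 2*Real.cos (freq L (κ j))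
      = ∑ j ∈ Finset.univ.erase i, 2*Real.cos (freq L (κ' j)) :=
    Finset.sum_congr rfl (fun j hj => by rw [hagree j (Finset.ne_of_mem_erase hj)])
  rw [heq]
  ring

lemma counting (d : ℕ) (hd : 1 ≤ d) (E : ℝ) (hE1 : 2*(d:ℝ) - 2 < |E|) (hE2 : |E| < 2*(d:ℝ))
    (R : ℝ) (hR : 0 ≤ R) :
    ∃ (C : ℕ) (L0 : ℕ), ∀ L : ℕ, L0 ≤ L →
      (Finset.univ.filter (fun κ : Fin d → Fin (2*L+1) =>
        |((L:ℝ)+1) * (eVal d L κ - E)| ≤ R)).card ≤ C * (2*L+1)^(d-1) := by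
  set δ1 := |E| - (2*(d:ℝ) - 2) with hδ1
  set δ2 := 2*(d:ℝ) - |E| with hδ2
  have hδ1pos : 0 < δ1 := by rw [hδ1]; linarith
  have hδ2pos : 0 < δ2 := by rw [hδ2]; linarith
  have hdpos : (0:ℝ) < d := by exact_mod_cast hd
  have hδ1lt : δ1 < 2 := by rw [hδ1]; linarith
  set ε := min (δ1/2) (δ2/(2*d)) with hε
  have hεpos : 0 < ε := lt_min (by linarith) (by positivity)
  have hε2 : ε ≤ 2 := le_trans (min_le_left _ _) (by linarith)
  set m := Real.sqrt (ε/2) with hm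
  have hmpos : 0 < m := Real.sqrt_pos.mpr (by positivity)
  have hminpos : 0 < min δ1 δ2 := lt_min hδ1pos hδ2pos
  refine ⟨d * (2*(Nat.ceil (2*R/(π*m)))+1), Nat.ceil (2*R/(min δ1 δ2)), fun L hL => ?_⟩
  set B := Nat.ceil (2*R/(π*m)) with hB
  set η := R/((L:ℝ)+1) with hη
  have hLpos : (0:ℝ) < (L:ℝ)+1 := by positivity
  have hηnonneg : 0 ≤ η := by positivity
  have hceil : 2*R/(min δ1 δ2) ≤ (L:ℝ) := by
    calc 2*R/(min δ1 δ2) ≤ (Nat.ceil (2*R/(min δ1 δ2)) : ℝ) := Nat.le_ceil _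
      _ ≤ (L:ℝ) := by exact_mod_cast hL
  have h2R : 2*R ≤ (min δ1 δ2) * (L:ℝ) := by
    rw [div_le_iff₀ hminpos] at hceil
    linarith
  have hη1 : η ≤ δ1/2 := by
    rw [hη, div_le_div_iff₀ hLpos two_pos]
    have h1 := min_le_left δ1 δ2
    nlinarith
  have hη2 : η ≤ δ2/2 := by
    rw [hη, div_le_div_iff₀ hLpos two_pos]
    have h1 := min_le_right δ1 δ2
    nlinarith
  -- membership implies the rescaled condition
  have hmem : ∀ κ : Fin d → Fin (2*L+1), |((L:ℝ)+1) * (eVal d L κ - E)| ≤ R →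
      |eVal d L κ - E| ≤ η := by
    intro κ h
    rw [abs_mul, abs_of_pos hLpos] at h
    rw [hη, le_div_iff₀ hLpos]
    linarith [h]
  -- existence of a good coordinate
  have key1 : ∀ κ : Fin d → Fin (2*L+1), |eVal d L κ - E| ≤ η →
      ∃ i, |Real.cos (freq L (κ i))| ≤ 1 - ε/2 := by
    intro κ hκ
    set sg : ℝ := (if 0 ≤ E then (1:ℝ) else -1) with hsg
    set c : Fin d → ℝ := fun i => sg * (2*Real.cos (freq L (κ i))) with hc
    have hsum : abs ((∑ i, c i) - |E|) ≤ η := by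
      rcases le_or_gt 0 E with hE0 | hE0
      · have : (∑ i, c i) = eVal d L κ := by
          rw [hc, eVal]
          refine Finset.sum_congr rfl (fun i _ => ?_)
          simp only [hsg, if_pos hE0, one_mul]
        rw [this, abs_of_nonneg hE0]
        exact hκ
      · have : (∑ i, c i) = -eVal d L κ := by
          rw [hc, eVal, ← Finset.sum_neg_distrib]
          refine Finset.sum_congr rfl (fun i _ => ?_)
          simp only [hsg, if_neg (not_le.mpr hE0)]
          ring
        rw [this, abs_of_neg hE0]
        rw [show -eVal d L κ - -E = -(eVal d L κ - E) by ring, abs_neg]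
        exact hκ
    have habs2 : ∀ i, |c i| ≤ 2 := by
      intro i
      rw [hc]
      have : |sg| = 1 := by
        rw [hsg]
        rcases le_or_gt 0 E with h | h
        · rw [if_pos h, abs_one]
        · rw [if_neg (not_le.mpr h)]
          norm_num
      rw [abs_mul, this, one_mul, abs_mul]
      have := Real.abs_cos_le_one (freq L (κ i))
      rw [abs_two]
      nlinarith
    have hsum_le : (∑ i, c i) ≤ |E| + η := by
      have := abs_le.mp hsum
      linarith [this.2]
    have hsum_ge : |E| - η ≤ (∑ i, c i) := by
      have := abs_le.mp hsum
      linarith [this.1]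
    have hlow : ∀ i, δ1/2 ≤ c i := by
      intro i
      have hsplit : (∑ j, c j) = c i + ∑ j ∈ Finset.univ.erase i, c j :=
        (Finset.add_sum_erase _ c (Finset.mem_univ i)).symm
      have hrest : ∑ j ∈ Finset.univ.erase i, c j ≤ 2*((d:ℝ)-1) := by
        have h1 : ∑ j ∈ Finset.univ.erase i, c j ≤ (Finset.univ.erase i).card • (2:ℝ) :=
          Finset.sum_le_card_nsmul _ _ _ (fun j _ => (abs_le.mp (habs2 j)).2)
        have h2 : (Finset.univ.erase i).card = d - 1 := by
          rw [Finset.card_erase_of_mem (Finset.mem_univ i), Finset.card_univ, Fintype.card_fin]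
        rw [h2, nsmul_eq_mul, Nat.cast_sub hd] at h1
        push_cast at h1
        linarith
      have := hsum_ge
      rw [hsplit] at this
      rw [hδ1] at *
      linarith [hη1]
    have hex : ∃ i, c i ≤ 2 - δ2/(2*d) := by
      by_contra hcon
      push_neg at hcon
      have hne : (Finset.univ : Finset (Fin d)).Nonempty := by
        refine ⟨⟨0, hd⟩, Finset.mem_univ _⟩
      have hstrict : ∑ _j : Fin d, (2 - δ2/(2*(d:ℝ))) < ∑ j, c j :=
        Finset.sum_lt_sum_of_nonempty hne (fun j _ => hcon j)
      rw [Finset.sum_const, Finset.card_univ, Fintype.card_fin, nsmul_eq_mul] at hstrict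
      have hdd : (d:ℝ) * (2 - δ2/(2*(d:ℝ))) = 2*(d:ℝ) - δ2/2 := by
        field_simp
      rw [hdd] at hstrict
      have : (∑ j, c j) ≤ 2*(d:ℝ) - δ2 + η := by
        rw [hδ2] at *
        linarith [hsum_le]
      linarith [hη2]
    obtain ⟨i, hi⟩ := hex
    refine ⟨i, ?_⟩
    have h1 : ε ≤ c i := le_trans (le_trans (min_le_left _ _) (le_refl _)) (hlow i)
    have h2 : c i ≤ 2 - ε := by
      have := min_le_right (δ1/2) (δ2/(2*d))
      rw [← hε] at this
      linarith
    have h3 : |c i| ≤ 2 - ε := by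
      rw [abs_of_pos (lt_of_lt_of_le hεpos h1)]
      exact h2
    have h4 : |c i| = 2 * |Real.cos (freq L (κ i))| := by
      rw [hc]
      have habs_sg : |sg| = 1 := by
        rw [hsg]
        rcases le_or_gt 0 E with h | h
        · rw [if_pos h, abs_one]
        · rw [if_neg (not_le.mpr h)]; norm_num
      rw [abs_mul, habs_sg, one_mul, abs_mul, abs_two]
    linarith [h4 ▸ h3]
  -- the per-coordinate filtered sets
  set G : Fin d → Finset (Fin d → Fin (2*L+1)) := fun i =>
    Finset.univ.filter (fun κ => |((L:ℝ)+1) * (eVal d L κ - E)| ≤ R ∧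
      |Real.cos (freq L (κ i))| ≤ 1 - ε/2) with hG
  have hsub : (Finset.univ.filter (fun κ : Fin d → Fin (2*L+1) =>
      |((L:ℝ)+1) * (eVal d L κ - E)| ≤ R)) ⊆ Finset.univ.biUnion G := by
    intro κ hκ
    rw [Finset.mem_filter] at hκ
    obtain ⟨i, hi⟩ := key1 κ (hmem κ hκ.2)
    rw [Finset.mem_biUnion]
    exact ⟨i, Finset.mem_univ i, by rw [hG, Finset.mem_filter]; exact ⟨Finset.mem_univ _, hκ.2, hi⟩⟩
  -- bound each G i
  have hGcard : ∀ i, (G i).card ≤ (2*B+1) * (2*L+1)^(d-1) := by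
    intro i
    set z0 : Fin (2*L+1) := ⟨0, by omega⟩ with hz0
    have hmaps : ∀ κ ∈ G i, Function.update κ i z0 ∈
        Finset.univ.filter (fun g : Fin d → Fin (2*L+1) => g i = z0) := by
      intro κ _
      rw [Finset.mem_filter]
      exact ⟨Finset.mem_univ _, Function.update_self i z0 κ⟩
    have hfib : ∀ g ∈ Finset.univ.filter (fun g : Fin d → Fin (2*L+1) => g i = z0),
        ((G i).filter (fun κ => Function.update κ i z0 = g)).card ≤ 2*B+1 := by
      intro g _
      set F := (G i).filter (fun κ => Function.update κ i z0 = g) with hF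
      rcases F.eq_empty_or_nonempty with hFe | ⟨κ₀, hκ₀⟩
      · rw [hFe]; simp
      · -- facts about members of F
        have hFmem : ∀ κ ∈ F, |((L:ℝ)+1) * (eVal d L κ - E)| ≤ R ∧
            |Real.cos (freq L (κ i))| ≤ 1 - ε/2 ∧ Function.update κ i z0 = g := by
          intro κ hκ
          rw [hF, Finset.mem_filter, hG, Finset.mem_filter] at hκ
          exact ⟨hκ.1.2.1, hκ.1.2.2, hκ.2⟩
        have hagree : ∀ κ ∈ F, ∀ j, j ≠ i → κ j = κ₀ j := by
          intro κ hκ j hj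
          have e1 := congrFun ((hFmem κ hκ).2.2) j
          have e2 := congrFun ((hFmem κ₀ hκ₀).2.2) j
          rw [Function.update_of_ne hj] at e1 e2
          rw [e1, ← e2]
        have hclose : ∀ κ ∈ F, |((κ i : ℕ):ℝ) - ((κ₀ i : ℕ):ℝ)| ≤ 2*R/(π*m) := by
          intro κ hκ
          have h1 := (hFmem κ hκ).1
          have h2 := (hFmem κ₀ hκ₀).1
          have hev : |eVal d L κ - eVal d L κ₀| ≤ 2*η := by
            have ha' := abs_le.mp (hmem κ h1)
            have hb' := abs_le.mp (hmem κ₀ h2)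
            rw [abs_le]
            constructor <;> linarith [ha'.1, ha'.2, hb'.1, hb'.2]
          have hcosdiff : |Real.cos (freq L (κ i)) - Real.cos (freq L (κ₀ i))| ≤ η := by
            have he := eVal_apart κ κ₀ i (hagree κ hκ)
            have : |2*Real.cos (freq L (κ i)) - 2*Real.cos (freq L (κ₀ i))| ≤ 2*η := by
              rw [← he]; exact hev
            rw [show 2*Real.cos (freq L (κ i)) - 2*Real.cos (freq L (κ₀ i))
              = 2*(Real.cos (freq L (κ i)) - Real.cos (freq L (κ₀ i))) by ring, abs_mul,
              abs_two] at this
            linarith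
          have hgap := cos_gap (freq_mem L (κ i)) (freq_mem L (κ₀ i)) hεpos hε2
            (hFmem κ hκ).2.1 (hFmem κ₀ hκ₀).2.1
          have hgap2 : m * |freq L (κ i) - freq L (κ₀ i)| ≤ η := le_trans hgap hcosdiff
          have hfreqdiff : |freq L (κ i) - freq L (κ₀ i)|
              = |((κ i : ℕ):ℝ) - ((κ₀ i : ℕ):ℝ)| * (π/(2*(L:ℝ)+2)) := by
            rw [freq, freq, div_sub_div_same, abs_div,
              abs_of_pos (show (0:ℝ) < 2*(L:ℝ)+2 by positivity),
              show (((κ i : ℕ):ℝ)+1) * π - (((κ₀ i : ℕ):ℝ)+1) * π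
                = (((κ i : ℕ):ℝ) - ((κ₀ i : ℕ):ℝ)) * π by ring,
              abs_mul, abs_of_pos Real.pi_pos]
            ring
          rw [le_div_iff₀ (by positivity : (0:ℝ) < π*m)]
          have hηL : η * (2*(L:ℝ)+2) = 2*R := by
            rw [hη]
            field_simp
          have : m * (|((κ i : ℕ):ℝ) - ((κ₀ i : ℕ):ℝ)| * (π/(2*(L:ℝ)+2))) ≤ η := by
            rw [← hfreqdiff]; exact hgap2
          have h2L : (0:ℝ) < 2*(L:ℝ)+2 := by positivity
          calc |((κ i : ℕ):ℝ) - ((κ₀ i : ℕ):ℝ)| * (π*m)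
              = (m * (|((κ i : ℕ):ℝ) - ((κ₀ i : ℕ):ℝ)| * (π/(2*(L:ℝ)+2)))) * (2*(L:ℝ)+2) := by
                field_simp
            _ ≤ η * (2*(L:ℝ)+2) := by
                apply mul_le_mul_of_nonneg_right this h2L.le
            _ = 2*R := hηL
        -- inject into an integer interval
        have hinj : Set.InjOn (fun κ : Fin d → Fin (2*L+1) => ((κ i : ℕ):ℤ)) F := by
          intro κ hκ κ' hκ' hval
          simp only at hval
          funext j
          by_cases hj : j = i
          · subst hj
            have : (κ j : ℕ) = (κ' j : ℕ) := by exact_mod_cast hval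
            exact Fin.ext this
          · rw [hagree κ hκ j hj, hagree κ' hκ' j hj]
        have hmapsI : ∀ κ ∈ F, ((κ i : ℕ):ℤ) ∈
            Finset.Icc (((κ₀ i : ℕ):ℤ) - B) (((κ₀ i : ℕ):ℤ) + B) := by
          intro κ hκ
          have h1 := hclose κ hκ
          have h2 : 2*R/(π*m) ≤ (B:ℝ) := Nat.le_ceil _
          have h3 : |((κ i : ℕ):ℝ) - ((κ₀ i : ℕ):ℝ)| ≤ (B:ℝ) := le_trans h1 h2
          rw [Finset.mem_Icc]
          have h4 : |((κ i : ℕ):ℤ) - ((κ₀ i : ℕ):ℤ)| ≤ (B:ℤ) := by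
            have : |(((κ i : ℕ):ℤ):ℝ) - (((κ₀ i : ℕ):ℤ):ℝ)| ≤ ((B:ℤ):ℝ) := by
              push_cast
              push_cast at h3
              exact h3
            exact_mod_cast (by rw [← Int.cast_sub, ← Int.cast_abs] at this; exact_mod_cast this)
          rw [abs_le] at h4
          omega
        have := Finset.card_le_card_of_injOn _ hmapsI hinj
        calc F.card ≤ (Finset.Icc (((κ₀ i : ℕ):ℤ) - B) (((κ₀ i : ℕ):ℤ) + B)).card := this
          _ = 2*B+1 := by
            rw [Int.card_Icc]
            omega
    have := Finset.card_le_mul_card_image_of_maps_to hmaps (2*B+1) hfib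
    calc (G i).card ≤ (2*B+1) *
        (Finset.univ.filter (fun g : Fin d → Fin (2*L+1) => g i = z0)).card := this
      _ = (2*B+1) * (2*L+1)^(d-1) := by rw [card_zeroed]
  calc (Finset.univ.filter (fun κ : Fin d → Fin (2*L+1) =>
      |((L:ℝ)+1) * (eVal d L κ - E)| ≤ R)).card
      ≤ (Finset.univ.biUnion G).card := Finset.card_le_card hsub
    _ ≤ ∑ i, (G i).card := Finset.card_biUnion_le
    _ ≤ ∑ _i : Fin d, (2*B+1) * (2*L+1)^(d-1) := Finset.sum_le_sum (fun i _ => hGcard i)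
    _ = d * ((2*B+1) * (2*L+1)^(d-1)) := by
        rw [Finset.sum_const, Finset.card_univ, Fintype.card_fin, smul_eq_mul]
    _ = d * (2*B+1) * (2*L+1)^(d-1) := by ring

/-- Lemma 3.3 of the paper: for `d ≥ 1` and `2d-2 < |E| < 2d`, for every
`f ∈ C_c^∞(ℝ)` the integrals `∫ f dμ⁰_{L,E}` are bounded uniformly in `L`. -/
theorem statement3 (d : ℕ) (hd : 1 ≤ d) (E : ℝ)
    (hE1 : 2 * (d : ℝ) - 2 < |E|) (hE2 : |E| < 2 * (d : ℝ))
    (f : ℝ → ℝ) (hf : ContDiff ℝ (⊤ : ℕ∞) f) (hsupp : HasCompactSupport f) :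
    ∃ C : ℝ, ∀ L : ℕ, ∫ x, f x ∂ (mu0 d L E) ≤ C := by
  have hcont : Continuous f := hf.continuous
  obtain ⟨M0, hM0⟩ := hsupp.exists_bound_of_continuous hcont
  set M : ℝ := max M0 0 with hM
  have hMnonneg : 0 ≤ M := le_max_right _ _
  have hfM : ∀ x, f x ≤ M := fun x =>
    le_trans (le_trans (le_abs_self _) (hM0 x)) (le_max_left _ _)
  obtain ⟨R0, hR0⟩ := (hsupp.isBounded).subset_closedBall 0
  set R : ℝ := max R0 0 with hR
  have hRnonneg : 0 ≤ R := le_max_right _ _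
  have hfzero : ∀ x : ℝ, R < |x| → f x = 0 := by
    intro x hx
    apply image_eq_zero_of_notMem_tsupport
    intro hmem
    have := hR0 hmem
    rw [Metric.mem_closedBall, Real.dist_eq, sub_zero] at this
    have : |x| ≤ R := le_trans this (le_max_left _ _)
    linarith
  have hE1' : 2*(d:ℝ) - 2 < |E| := by linarith
  have hE2' : |E| < 2*(d:ℝ) := by linarith
  obtain ⟨C1, L0, hC1⟩ := counting d hd E hE1' hE2' R hRnonneg
  refine ⟨M * max (2*(L0:ℝ)+1) (C1:ℝ), fun L => ?_⟩
  have hP : (0:ℝ) < (2*(L:ℝ)+1) ^ (d-1) := by positivity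
  have hν : (0:ℝ) ≤ ((2*(L:ℝ)+1) ^ (d-1))⁻¹ := by positivity
  -- the sum bound
  set cnt := (Finset.univ.filter (fun κ : Fin d → Fin (2*L+1) =>
    |((L:ℝ)+1) * (eVal d L κ - E)| ≤ R)).card with hcnt
  have hsum : ∑ κ : Fin d → Fin (2*L+1), f (((L:ℝ)+1) * (eVal d L κ - E))
      ≤ (cnt : ℝ) * M := by
    have hpt : ∀ κ : Fin d → Fin (2*L+1), f (((L:ℝ)+1) * (eVal d L κ - E))
        ≤ if |((L:ℝ)+1) * (eVal d L κ - E)| ≤ R then M else 0 := by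
      intro κ
      by_cases h : |((L:ℝ)+1) * (eVal d L κ - E)| ≤ R
      · rw [if_pos h]; exact hfM _
      · rw [if_neg h, hfzero _ (lt_of_not_ge h)]
    calc ∑ κ : Fin d → Fin (2*L+1), f (((L:ℝ)+1) * (eVal d L κ - E))
        ≤ ∑ κ : Fin d → Fin (2*L+1),
            (if |((L:ℝ)+1) * (eVal d L κ - E)| ≤ R then M else (0:ℝ)) :=
          Finset.sum_le_sum (fun κ _ => hpt κ)
      _ = (cnt : ℝ) * M := by
          rw [Finset.sum_ite, Finset.sum_const, Finset.sum_const_zero, add_zero, nsmul_eq_mul]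
  have hint : ∫ x, f x ∂ (mu0 d L E)
      ≤ ((2*(L:ℝ)+1) ^ (d-1))⁻¹ * ((cnt : ℝ) * M) := by
    rw [integral_mu0 d L E f hcont hsupp, norm_toReal d L hd]
    exact mul_le_mul_of_nonneg_left hsum hν
  rcases le_or_gt L0 L with hL | hL
  · -- large L: use the counting bound
    have hcard' : (cnt : ℝ) ≤ (C1 : ℝ) * ((2*(L:ℝ)+1) ^ (d-1)) := by
      have h : (cnt : ℝ) ≤ ((C1 * (2*L+1)^(d-1) : ℕ) : ℝ) := Nat.cast_le.mpr (hC1 L hL)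
      push_cast at h
      exact h
    calc ∫ x, f x ∂ (mu0 d L E)
        ≤ ((2*(L:ℝ)+1) ^ (d-1))⁻¹ * ((cnt : ℝ) * M) := hint
      _ ≤ ((2*(L:ℝ)+1) ^ (d-1))⁻¹ * (((C1 : ℝ) * ((2*(L:ℝ)+1) ^ (d-1))) * M) := by
          apply mul_le_mul_of_nonneg_left (mul_le_mul_of_nonneg_right hcard' hMnonneg) hν
      _ = M * (C1 : ℝ) * (((2*(L:ℝ)+1) ^ (d-1))⁻¹ * ((2*(L:ℝ)+1) ^ (d-1))) := by ring
      _ = M * (C1 : ℝ) := by rw [inv_mul_cancel₀ (ne_of_gt hP), mul_one]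
      _ ≤ M * max (2*(L0:ℝ)+1) (C1:ℝ) :=
          mul_le_mul_of_nonneg_left (le_max_right _ _) hMnonneg
  · -- small L: trivial bound by the total number of eigenvalues
    have hcard : cnt ≤ (2*L+1)^d := by
      calc cnt ≤ (Finset.univ : Finset (Fin d → Fin (2*L+1))).card := Finset.card_filter_le _ _
        _ = (2*L+1)^d := by rw [Finset.card_univ, Fintype.card_fun, Fintype.card_fin,
              Fintype.card_fin]
    have hpow : ((2*L+1 : ℕ) : ℝ)^d = (2*(L:ℝ)+1) ^ (d-1) * (2*(L:ℝ)+1) := by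
      have hd1 : d - 1 + 1 = d := by omega
      rw [← hd1, pow_succ]
      push_cast
      ring
    have hcard' : (cnt : ℝ) ≤ (2*(L:ℝ)+1) ^ (d-1) * (2*(L:ℝ)+1) := by
      rw [← hpow]
      exact_mod_cast hcard
    calc ∫ x, f x ∂ (mu0 d L E)
        ≤ ((2*(L:ℝ)+1) ^ (d-1))⁻¹ * ((cnt : ℝ) * M) := hint
      _ ≤ ((2*(L:ℝ)+1) ^ (d-1))⁻¹ * (((2*(L:ℝ)+1) ^ (d-1) * (2*(L:ℝ)+1)) * M) := by
          apply mul_le_mul_of_nonneg_left (mul_le_mul_of_nonneg_right hcard' hMnonneg) hν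
      _ = M * (2*(L:ℝ)+1) * (((2*(L:ℝ)+1) ^ (d-1))⁻¹ * ((2*(L:ℝ)+1) ^ (d-1))) := by ring
      _ = M * (2*(L:ℝ)+1) := by rw [inv_mul_cancel₀ (ne_of_gt hP), mul_one]
      _ ≤ M * (2*(L0:ℝ)+1) := by
          apply mul_le_mul_of_nonneg_left _ hMnonneg
          have : (L:ℝ) ≤ (L0:ℝ) := by exact_mod_cast hL.le
          linarith
      _ ≤ M * max (2*(L0:ℝ)+1) (C1:ℝ) :=
          mul_le_mul_of_nonneg_left (le_max_left _ _) hMnonneg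

end LevelRepulsion
end

section
/- Let d ≥ 3, ε > 0, let (q_n)_{n∈ℤ^d} be i.i.d. real random variables with E|q_0| < ∞, and let (a_n)_{n∈ℤ^d} be positive reals with sup_n a_n (1+|n|)^{2+ε} < ∞. Then almost surely (2L+1)^{−(d−2)} Σ_{n ∈ Λ_L} a_n |q_n(ω)| → 0 as L → ∞. -/
open MeasureTheory Finset Real

namespace LevelRepulsion

/-- The cube `Λ_L = {n ∈ ℤ^d : |n_i| ≤ L}` as a finite set of lattice points. -/
noncomputable def box (d L : ℕ) : Finset (Fin d → ℤ) :=
  Fintype.piFinset fun _ => Finset.Icc (-(L:ℤ)) (L:ℤ)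

lemma znorm_nonneg {d : ℕ} (n : Fin d → ℤ) : 0 ≤ znorm n := Nat.cast_nonneg _

lemma znorm_le_of_mem_box {d L : ℕ} {n : Fin d → ℤ} (hn : n ∈ box d L) :
    znorm n ≤ (L : ℝ) := by
  simp only [box, Fintype.mem_piFinset, Finset.mem_Icc] at hn
  have h : (Finset.univ.sup fun i => (n i).natAbs) ≤ L := by
    apply Finset.sup_le
    intro i _
    have := hn i
    omega
  unfold znorm
  exact_mod_cast h

lemma abs_coord_le {d : ℕ} (n : Fin d → ℤ) (i : Fin d) :
    |((n i : ℝ))| ≤ znorm n := by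
  have h1 : ((n i).natAbs : ℝ) ≤ znorm n := by
    unfold znorm
    exact_mod_cast Finset.le_sup (f := fun i => (n i).natAbs) (Finset.mem_univ i)
  have h2 : |((n i : ℝ))| = ((n i).natAbs : ℝ) := by
    rw [Nat.cast_natAbs]
    push_cast
    ring
  linarith

lemma prod_le_pow {d : ℕ} (n : Fin d → ℤ) :
    ∏ i, (1 + |((n i : ℝ))|) ≤ (1 + znorm n) ^ d := by
  calc ∏ i, (1 + |((n i : ℝ))|) ≤ ∏ _i : Fin d, (1 + znorm n) :=
        Finset.prod_le_prod (fun i _ => by positivity)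
          (fun i _ => by linarith [abs_coord_le n i])
    _ = (1 + znorm n) ^ d := by
        rw [Finset.prod_const, Finset.card_univ, Fintype.card_fin]

lemma summable_aux {s : ℝ} (hs : 1 < s) :
    Summable (fun k : ℤ => (1 + |((k : ℝ))|) ^ (-s)) := by
  have hnat : Summable (fun m : ℕ => (1 + (m : ℝ)) ^ (-s)) := by
    have h0 : Summable (fun m : ℕ => ((m : ℝ) ^ s)⁻¹) :=
      Real.summable_nat_rpow_inv.mpr hs
    have h1 : Summable (fun m : ℕ => (((m + 1 : ℕ) : ℝ) ^ s)⁻¹) :=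
      h0.comp_injective (add_left_injective 1)
    refine h1.congr fun m => ?_
    rw [Real.rpow_neg (by positivity)]
    push_cast
    ring_nf
  apply Summable.of_nat_of_neg
  · refine hnat.congr fun m => ?_
    simp [abs_of_nonneg]
  · refine hnat.congr fun m => ?_
    simp [abs_of_nonneg]

/-- The key almost sure estimate in Theorem 2.2 of the paper: for `d ≥ 3`, `(q_n)` i.i.d.
with `E|q_0| < ∞`, and positive coefficients with `sup_n a_n (1+|n|)^{2+ε} < ∞`, one has
`(2L+1)^{-(d-2)} Σ_{n∈Λ_L} a_n |q_n(ω)| → 0` almost surely as `L → ∞`. -/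
theorem statement13 {Ω : Type*} [MeasurableSpace Ω] (P : Measure Ω)
    [IsProbabilityMeasure P]
    (d : ℕ) (hd : 3 ≤ d) (ε : ℝ) (hε : 0 < ε)
    (q : (Fin d → ℤ) → Ω → ℝ) (hmeas : ∀ n, Measurable (q n))
    (hindep : ProbabilityTheory.iIndepFun q P)
    (hident : ∀ n, ProbabilityTheory.IdentDistrib (q n) (q 0) P P)
    (hint : Integrable (q 0) P)
    (a : (Fin d → ℤ) → ℝ) (hapos : ∀ n, 0 < a n)
    (hbd : ∃ C : ℝ, ∀ n, a n * (1 + znorm n) ^ (2 + ε) ≤ C) :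
    ∀ᵐ ω ∂P, Filter.Tendsto
      (fun L : ℕ => ((2 * (L : ℝ) + 1) ^ (d - 2))⁻¹ * ∑ n ∈ box d L, a n * |q n ω|)
      Filter.atTop (nhds 0) := by
  classical
  obtain ⟨C, hC⟩ := hbd
  -- replace ε by ε' = min ε 1
  set ε' : ℝ := min ε 1 with hε'def
  have hε'pos : 0 < ε' := lt_min hε zero_lt_one
  have hε'le1 : ε' ≤ 1 := min_le_right _ _
  have hε'ε : ε' ≤ ε := min_le_left _ _
  have hd0 : (0 : ℝ) < d := by
    have : (3 : ℝ) ≤ d := by exact_mod_cast hd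
    linarith
  have hd3 : (3 : ℝ) ≤ d := by exact_mod_cast hd
  -- exponents
  set s : ℝ := ((d : ℝ) + ε' / 2) / d with hsdef
  have hs1 : 1 < s := by
    rw [hsdef, lt_div_iff₀ hd0]
    linarith
  set β : ℝ := (d : ℝ) - 2 - ε' / 2 with hβdef
  have hβ0 : 0 ≤ β := by rw [hβdef]; linarith
  -- weights
  set g : ℤ → ℝ := fun k => (1 + |((k : ℝ))|) ^ (-s) with hgdef
  have hg0 : ∀ k, 0 ≤ g k := fun k => Real.rpow_nonneg (by positivity) _
  have hg : Summable g := summable_aux hs1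
  set B : ℝ := ∑' k, g k with hBdef
  have hB0 : 0 ≤ B := tsum_nonneg hg0
  set h : (Fin d → ℤ) → ℝ := fun n => ∏ i, g (n i) with hhdef
  have hh0 : ∀ n, 0 ≤ h n := fun n => Finset.prod_nonneg fun i _ => hg0 _
  -- positivity of C
  have hC0 : 0 < C := by
    have h0 : (0:ℝ) < a 0 * (1 + znorm (0 : Fin d → ℤ)) ^ (2 + ε) := by
      apply mul_pos (hapos 0)
      apply Real.rpow_pos_of_pos
      linarith [znorm_nonneg (0 : Fin d → ℤ)]
    exact lt_of_lt_of_le h0 (hC 0)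
  -- key coefficient bound
  have ha : ∀ n, a n ≤ C * (1 + znorm n) ^ (-(2 + ε')) := by
    intro n
    have hz1 : (1 : ℝ) ≤ 1 + znorm n := by linarith [znorm_nonneg n]
    have hz0 : (0 : ℝ) < 1 + znorm n := by linarith
    have h1 : a n * (1 + znorm n) ^ (2 + ε') ≤ C := by
      refine le_trans ?_ (hC n)
      exact mul_le_mul_of_nonneg_left
        (Real.rpow_le_rpow_of_exponent_le hz1 (by linarith)) (hapos n).le
    rw [Real.rpow_neg hz0.le, ← div_eq_mul_inv, le_div_iff₀ (Real.rpow_pos_of_pos hz0 _)]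
    exact h1
  -- key pointwise weight estimate on the box
  have hkey : ∀ L : ℕ, ∀ n ∈ box d L,
      (1 + znorm n) ^ (-(2 + ε')) ≤ (1 + (L : ℝ)) ^ β * h n := by
    intro L n hn
    have hz0 : (0 : ℝ) < 1 + znorm n := by linarith [znorm_nonneg n]
    have hsplit : (1 + znorm n) ^ (-(2 + ε'))
        = (1 + znorm n) ^ β * (1 + znorm n) ^ (-((d : ℝ) + ε' / 2)) := by
      rw [← Real.rpow_add hz0]
      congr 1
      rw [hβdef]
      ring
    rw [hsplit]
    have h1 : (1 + znorm n) ^ β ≤ (1 + (L : ℝ)) ^ β :=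
      Real.rpow_le_rpow hz0.le (by linarith [znorm_le_of_mem_box hn]) hβ0
    have h2 : (1 + znorm n) ^ (-((d : ℝ) + ε' / 2)) ≤ h n := by
      have hprodpos : (0 : ℝ) < ∏ i, (1 + |((n i : ℝ))|) :=
        Finset.prod_pos fun i _ => by positivity
      have hle : ∏ i, (1 + |((n i : ℝ))|) ≤ (1 + znorm n) ^ ((d : ℝ)) := by
        rw [Real.rpow_natCast]
        exact prod_le_pow n
      have h3 : ((1 + znorm n) ^ ((d : ℝ))) ^ (-s) ≤ (∏ i, (1 + |((n i : ℝ))|)) ^ (-s) :=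
        Real.rpow_le_rpow_of_nonpos hprodpos hle (by linarith)
      have h4 : ((1 + znorm n) ^ ((d : ℝ))) ^ (-s) = (1 + znorm n) ^ (-((d : ℝ) + ε' / 2)) := by
        rw [← Real.rpow_mul hz0.le]
        congr 1
        rw [hsdef]
        field_simp
      have h5 : (∏ i, (1 + |((n i : ℝ))|)) ^ (-s) = h n := by
        rw [hhdef, ← Real.finset_prod_rpow _ _ (fun i _ => by positivity)]
      rw [← h4, ← h5] at *
      exact h3
    have := mul_le_mul h1 h2 (Real.rpow_nonneg hz0.le _) (Real.rpow_nonneg (by positivity) _)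
    exact this
  -- integrability facts
  have hqint : ∀ n, Integrable (q n) P := fun n => (hident n).integrable_iff.mpr hint
  set I : ℝ := ∫ ω, |q 0 ω| ∂P with hIdef
  have hI0 : 0 ≤ I := integral_nonneg fun ω => abs_nonneg _
  have habsint : ∀ n, ∫ ω, |q n ω| ∂P = I := by
    intro n
    exact ((hident n).comp measurable_norm).integral_eq
  -- the dominating sums
  set F : ℕ → Ω → ENNReal := fun L ω => ENNReal.ofReal (∑ n ∈ box d L, h n * |q n ω|)
    with hFdef
  have hFmeas : ∀ L, Measurable (F L) := by
    intro L
    apply Measurable.ennreal_ofReal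
    exact Finset.measurable_sum _ fun n _ => ((hmeas n).norm.const_mul (h n))
  have hFmono : Monotone F := by
    intro L L' hLL ω
    apply ENNReal.ofReal_le_ofReal
    apply Finset.sum_le_sum_of_subset_of_nonneg
    · exact Fintype.piFinset_subset _ _ fun i =>
        Finset.Icc_subset_Icc (by exact_mod_cast neg_le_neg (Int.ofNat_le.mpr hLL))
          (by exact_mod_cast Int.ofNat_le.mpr hLL)
    · intro n _ _
      exact mul_nonneg (hh0 n) (abs_nonneg _)
  have hFbound : ∀ L, ∫⁻ ω, F L ω ∂P ≤ ENNReal.ofReal (B ^ d * I) := by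
    intro L
    have hstep : ∀ ω, F L ω = ∑ n ∈ box d L, ENNReal.ofReal (h n * |q n ω|) := by
      intro ω
      rw [hFdef]
      exact ENNReal.ofReal_sum_of_nonneg fun n _ => by exact mul_nonneg (hh0 n) (abs_nonneg _)
    calc ∫⁻ ω, F L ω ∂P
        = ∑ n ∈ box d L, ∫⁻ ω, ENNReal.ofReal (h n * |q n ω|) ∂P := by
          simp_rw [hstep]
          exact lintegral_finset_sum _ fun n _ =>
            (((hmeas n).norm.const_mul (h n)).ennreal_ofReal)
      _ = ∑ n ∈ box d L, ENNReal.ofReal (h n * I) := by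
          apply Finset.sum_congr rfl
          intro n _
          rw [← MeasureTheory.ofReal_integral_eq_lintegral_ofReal
            (((hqint n).abs).const_mul (h n))
            (Filter.Eventually.of_forall fun ω => by exact mul_nonneg (hh0 n) (abs_nonneg _)),
            integral_const_mul (h n), habsint n]
      _ = ENNReal.ofReal (∑ n ∈ box d L, h n * I) :=
          (ENNReal.ofReal_sum_of_nonneg fun n _ => mul_nonneg (hh0 n) hI0).symm
      _ ≤ ENNReal.ofReal (B ^ d * I) := by
          apply ENNReal.ofReal_le_ofReal
          rw [← Finset.sum_mul]
          apply mul_le_mul_of_nonneg_right _ hI0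
          have hfact : ∑ n ∈ box d L, h n
              = ∏ _i : Fin d, ∑ k ∈ Finset.Icc (-(L:ℤ)) (L:ℤ), g k := by
            rw [hhdef, box, Finset.prod_univ_sum]
          rw [hfact]
          have hfle : ∑ k ∈ Finset.Icc (-(L:ℤ)) (L:ℤ), g k ≤ B :=
            Summable.sum_le_tsum _ (fun k _ => hg0 k) hg
          calc ∏ _i : Fin d, ∑ k ∈ Finset.Icc (-(L:ℤ)) (L:ℤ), g k
              ≤ ∏ _i : Fin d, B :=
                Finset.prod_le_prod (fun i _ => Finset.sum_nonneg fun k _ => hg0 k)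
                  (fun i _ => hfle)
            _ = B ^ d := by rw [Finset.prod_const, Finset.card_univ, Fintype.card_fin]
  -- almost sure finiteness of the supremum
  have hsupmeas : Measurable fun ω => ⨆ L, F L ω := Measurable.iSup hFmeas
  have hsupfin : ∫⁻ ω, (⨆ L, F L ω) ∂P < ⊤ := by
    rw [lintegral_iSup hFmeas hFmono]
    exact lt_of_le_of_lt (iSup_le hFbound) ENNReal.ofReal_lt_top
  have hae : ∀ᵐ ω ∂P, (⨆ L, F L ω) < ⊤ := ae_lt_top hsupmeas hsupfin.ne
  filter_upwards [hae] with ω hω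
  set c : ℝ := (⨆ L, F L ω).toReal with hcdef
  have hc0 : 0 ≤ c := ENNReal.toReal_nonneg
  have hTc : ∀ L, ∑ n ∈ box d L, h n * |q n ω| ≤ c := by
    intro L
    have h1 : F L ω ≤ ⨆ L, F L ω := le_iSup (fun L => F L ω) L
    have h2 := ENNReal.toReal_mono hω.ne h1
    rwa [hFdef, ENNReal.toReal_ofReal
      (Finset.sum_nonneg fun n _ => by exact mul_nonneg (hh0 n) (abs_nonneg _))] at h2
  -- pointwise bound on the normalized sums
  have hbound : ∀ L : ℕ,
      ((2 * (L : ℝ) + 1) ^ (d - 2))⁻¹ * ∑ n ∈ box d L, a n * |q n ω|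
        ≤ C * c * (2 * (L : ℝ) + 1) ^ (-(ε' / 2)) := by
    intro L
    have hLpos : (0 : ℝ) < 2 * (L : ℝ) + 1 := by positivity
    have hsum : ∑ n ∈ box d L, a n * |q n ω|
        ≤ C * (1 + (L : ℝ)) ^ β * ∑ n ∈ box d L, h n * |q n ω| := by
      rw [Finset.mul_sum]
      apply Finset.sum_le_sum
      intro n hn
      have := mul_le_mul_of_nonneg_right
        (le_trans (ha n) (mul_le_mul_of_nonneg_left (hkey L n hn) hC0.le))
        (abs_nonneg (q n ω))
      calc a n * |q n ω| ≤ C * ((1 + (L:ℝ)) ^ β * h n) * |q n ω| := this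
        _ = C * (1 + (L:ℝ)) ^ β * (h n * |q n ω|) := by ring
    have h2 : ∑ n ∈ box d L, a n * |q n ω| ≤ C * c * (1 + (L : ℝ)) ^ β := by
      calc ∑ n ∈ box d L, a n * |q n ω|
          ≤ C * (1 + (L : ℝ)) ^ β * ∑ n ∈ box d L, h n * |q n ω| := hsum
        _ ≤ C * (1 + (L : ℝ)) ^ β * c := by
            apply mul_le_mul_of_nonneg_left (hTc L)
            positivity
        _ = C * c * (1 + (L : ℝ)) ^ β := by ring
    have h3 : ((2 * (L : ℝ) + 1) ^ (d - 2))⁻¹ * ((1 + (L : ℝ)) ^ β)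
        ≤ (2 * (L : ℝ) + 1) ^ (-(ε' / 2)) := by
      have e1 : ((2 * (L : ℝ) + 1) ^ (d - 2) : ℝ) = (2 * (L : ℝ) + 1) ^ (((d - 2 : ℕ)) : ℝ) :=
        (Real.rpow_natCast _ _).symm
      have e2 : (((d - 2 : ℕ)) : ℝ) = (d : ℝ) - 2 := by
        have : (2 : ℕ) ≤ d := by omega
        push_cast [Nat.cast_sub this]
        ring
      have h4 : (1 + (L : ℝ)) ^ β ≤ (2 * (L : ℝ) + 1) ^ β :=
        Real.rpow_le_rpow (by positivity) (by linarith [Nat.cast_nonneg (α := ℝ) L]) hβ0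
      calc ((2 * (L : ℝ) + 1) ^ (d - 2))⁻¹ * ((1 + (L : ℝ)) ^ β)
          ≤ ((2 * (L : ℝ) + 1) ^ (d - 2))⁻¹ * ((2 * (L : ℝ) + 1) ^ β) := by
            apply mul_le_mul_of_nonneg_left h4
            positivity
        _ = (2 * (L : ℝ) + 1) ^ (-(ε' / 2)) := by
            rw [e1, e2, ← Real.rpow_neg hLpos.le, ← Real.rpow_add hLpos]
            congr 1
            rw [hβdef]
            ring
    calc ((2 * (L : ℝ) + 1) ^ (d - 2))⁻¹ * ∑ n ∈ box d L, a n * |q n ω|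
        ≤ ((2 * (L : ℝ) + 1) ^ (d - 2))⁻¹ * (C * c * (1 + (L : ℝ)) ^ β) := by
          apply mul_le_mul_of_nonneg_left h2
          positivity
      _ = C * c * (((2 * (L : ℝ) + 1) ^ (d - 2))⁻¹ * ((1 + (L : ℝ)) ^ β)) := by ring
      _ ≤ C * c * (2 * (L : ℝ) + 1) ^ (-(ε' / 2)) := by
          apply mul_le_mul_of_nonneg_left h3
          positivity
  -- conclude by squeezing
  have hnn : ∀ L : ℕ,
      0 ≤ ((2 * (L : ℝ) + 1) ^ (d - 2))⁻¹ * ∑ n ∈ box d L, a n * |q n ω| := by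
    intro L
    apply mul_nonneg (by positivity)
    exact Finset.sum_nonneg fun n _ => mul_nonneg (hapos n).le (abs_nonneg _)
  have htend : Filter.Tendsto (fun L : ℕ => C * c * (2 * (L : ℝ) + 1) ^ (-(ε' / 2)))
      Filter.atTop (nhds 0) := by
    have h1 : Filter.Tendsto (fun L : ℕ => 2 * (L : ℝ) + 1) Filter.atTop Filter.atTop := by
      apply Filter.tendsto_atTop_add_const_right
      exact Filter.Tendsto.const_mul_atTop two_pos tendsto_natCast_atTop_atTop
    have h2 : Filter.Tendsto (fun L : ℕ => (2 * (L : ℝ) + 1) ^ (-(ε' / 2)))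
        Filter.atTop (nhds 0) := (tendsto_rpow_neg_atTop (by positivity)).comp h1
    have := h2.const_mul (C * c)
    simpa using this
  exact squeeze_zero hnn hbound htend

end LevelRepulsion
end
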